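/- Let h : [0,T] → [a,b] ⊂ (1/2,1) be of bounded variation and Lipschitz, and set K(t,s) = K_{h(t)}(t,s) with K_λ as above. Then for every s ∈ (0,T), the function t ↦ K(t,s) has bounded variation on (s,T], and ∫₀^T |K|((s,T],s)² ds < ∞, where |K|((s,T],s) is the total variation of t ↦ K(t,s) on (s,T]. -/

import Mathlib

open MeasureTheory Set

/-- The Volterra kernel of fractional Brownian motion with Hurst parameter `H > 1/2`. -/
noncomputable def K (H t s : ℝ) : ℝ :=
  s ^ (1/2 - H) * ∫ y in Set.Ioo s t, (y - s) ^ (H - 3/2) * y ^ (H - 1/2)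

/-!
Fix `ε > 0` with `1/2 < a - ε` and `b + ε < 1`. For fixed `s > 0`, `K H t s = ∫_s^t q_H` with
density `q_H = kernelDensity s H`, and `q_H(y) = W ^ H * q_0(y)` where `W = (y - s) y / s`. On
`[a, b]` the exponent derivative `|log W| W ^ H` is at most `(2/ε) (W ^ (a-ε) + W ^ (b+ε))`, so
`q_H` is Lipschitz in `H` with constant `(2/ε) g`, where `g = q_(a-ε) + q_(b+ε)` also dominates
every `q_H`. Splitting `∫_s^t q_(h t) - ∫_s^t' q_(h t')` at `t'` gives
`|K (h t) t s - K (h t') t' s| ≤ (2/ε) |h t - h t'| G(s) + ∫_t'^t g` with `G(s) = ∫_s^T g`,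
so the variation of `t ↦ K (h t) t s` is at most `((2/ε) Var h + 1) G(s)`. Finally
`G(s) = K (a-ε) T s + K (b+ε) T s ≲ s ^ (1/2 - a + ε) + s ^ (1/2 - b - ε)`, which is square
integrable near `0` because `b + ε < 1`.
-/

open Real
open scoped ENNReal

theorem eVariationOn_le_mul_add_of_edist_le {α E F G : Type*} [LinearOrder α]
    [PseudoEMetricSpace E] [PseudoEMetricSpace F] [PseudoEMetricSpace G]
    {f : α → E} {g₁ : α → F} {g₂ : α → G} {s : Set α} {C : ℝ≥0∞}
    (hf : ∀ x ∈ s, ∀ y ∈ s, x ≤ y →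
      edist (f x) (f y) ≤ C * edist (g₁ x) (g₁ y) + edist (g₂ x) (g₂ y)) :
    eVariationOn f s ≤ C * eVariationOn g₁ s + eVariationOn g₂ s := by
  refine iSup_le fun ⟨n, u, hu, us⟩ => ?_
  calc ∑ i ∈ Finset.range n, edist (f (u (i + 1))) (f (u i))
      ≤ ∑ i ∈ Finset.range n,
          (C * edist (g₁ (u (i + 1))) (g₁ (u i)) + edist (g₂ (u (i + 1))) (g₂ (u i))) :=
        Finset.sum_le_sum fun i _ => by
          simpa only [edist_comm] using hf _ (us i) _ (us (i + 1)) (hu i.le_succ)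
    _ = C * ∑ i ∈ Finset.range n, edist (g₁ (u (i + 1))) (g₁ (u i))
          + ∑ i ∈ Finset.range n, edist (g₂ (u (i + 1))) (g₂ (u i)) := by
        rw [Finset.sum_add_distrib, Finset.mul_sum]
    _ ≤ C * eVariationOn g₁ s + eVariationOn g₂ s := by
        gcongr <;> exact eVariationOn.sum_le hu us

section ParametricVolterra

variable {q : ℝ → ℝ → ℝ} {g : ℝ → ℝ} {I : Set ℝ} {s T C : ℝ}

theorem abs_intervalIntegral_param_sub_le
    (hq : ∀ p ∈ I, IntervalIntegrable (q p) volume s T) (hg : IntervalIntegrable g volume s T)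
    (hdom : ∀ p ∈ I, ∀ y ∈ Ioc s T, |q p y| ≤ g y)
    (hlip : ∀ p ∈ I, ∀ p' ∈ I, ∀ y ∈ Ioc s T, |q p y - q p' y| ≤ C * |p - p'| * g y)
    (hC : 0 ≤ C) {p p' t t' : ℝ} (hp : p ∈ I) (hp' : p' ∈ I)
    (hst' : s ≤ t') (ht't : t' ≤ t) (htT : t ≤ T) :
    |(∫ y in s..t, q p y) - ∫ y in s..t', q p' y|
      ≤ C * |p - p'| * (∫ y in s..T, g y) + ∫ y in t'..t, g y := by
  have hsub : ∀ {c d}, s ≤ c → c ≤ d → d ≤ T → uIcc c d ⊆ uIcc s T := fun hc hcd hd => by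
    rw [uIcc_of_le hcd, uIcc_of_le (hc.trans (hcd.trans hd))]
    exact Icc_subset_Icc hc hd
  have hsub₁ := hsub le_rfl hst' (ht't.trans htT)
  have hsub₂ := hsub hst' ht't htT
  have split : ∫ y in s..t, q p y = (∫ y in s..t', q p y) + ∫ y in t'..t, q p y :=
    (intervalIntegral.integral_add_adjacent_intervals ((hq p hp).mono_set hsub₁)
      ((hq p hp).mono_set hsub₂)).symm
  have hg0 : ∀ y ∈ Ioc s T, 0 ≤ g y := fun y hy => (abs_nonneg _).trans (hdom p hp y hy)
  have near : |∫ y in s..t', (q p y - q p' y)| ≤ C * |p - p'| * ∫ y in s..T, g y :=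
    calc |∫ y in s..t', (q p y - q p' y)|
        ≤ ∫ y in s..t', C * |p - p'| * g y :=
          intervalIntegral.norm_integral_le_of_norm_le (f := fun y => q p y - q p' y) hst'
            (Filter.Eventually.of_forall fun y hy =>
              hlip p hp p' hp' y ⟨hy.1, hy.2.trans (ht't.trans htT)⟩)
            ((hg.mono_set hsub₁).const_mul _)
      _ = C * |p - p'| * ∫ y in s..t', g y := intervalIntegral.integral_const_mul _ _
      _ ≤ C * |p - p'| * ∫ y in s..T, g y := by
          refine mul_le_mul_of_nonneg_left ?_ (by positivity)
          exact intervalIntegral.integral_mono_interval le_rfl hst' (ht't.trans htT)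
            ((ae_restrict_iff' measurableSet_Ioc).2 (Filter.Eventually.of_forall hg0)) hg
  have far : |∫ y in t'..t, q p y| ≤ ∫ y in t'..t, g y :=
    intervalIntegral.norm_integral_le_of_norm_le (f := q p) ht't
      (Filter.Eventually.of_forall fun y hy => hdom p hp y ⟨hst'.trans_lt hy.1, hy.2.trans htT⟩)
      (hg.mono_set hsub₂)
  rw [intervalIntegral.integral_sub ((hq p hp).mono_set hsub₁)
    ((hq p' hp').mono_set hsub₁)] at near
  rw [split, add_sub_right_comm]
  exact (abs_add_le _ _).trans (add_le_add near far)

theorem eVariationOn_intervalIntegral_param_le {h : ℝ → ℝ}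
    (hq : ∀ p ∈ I, IntervalIntegrable (q p) volume s T) (hg : IntervalIntegrable g volume s T)
    (hdom : ∀ p ∈ I, ∀ y ∈ Ioc s T, |q p y| ≤ g y)
    (hlip : ∀ p ∈ I, ∀ p' ∈ I, ∀ y ∈ Ioc s T, |q p y - q p' y| ≤ C * |p - p'| * g y)
    (hC : 0 ≤ C) (hsT : s ≤ T) (hh : ∀ t ∈ Icc s T, h t ∈ I) :
    eVariationOn (fun t => ∫ y in s..t, q (h t) y) (Icc s T)
      ≤ ENNReal.ofReal (C * ∫ y in s..T, g y) * eVariationOn h (Icc s T)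
        + ENNReal.ofReal (∫ y in s..T, g y) := by
  set Φ : ℝ → ℝ := fun t => ∫ y in s..t, g y
  have hg0 : ∀ y ∈ Ioc s T, 0 ≤ g y := fun y hy =>
    (abs_nonneg _).trans (hdom _ (hh s ⟨le_rfl, hsT⟩) y hy)
  have hΦ_sub : ∀ t' ∈ Icc s T, ∀ t ∈ Icc s T, t' ≤ t →
      Φ t - Φ t' = ∫ y in t'..t, g y ∧ 0 ≤ ∫ y in t'..t, g y := by
    intro t' ht' t ht htt
    refine ⟨intervalIntegral.integral_interval_sub_left (hg.mono_set ?_) (hg.mono_set ?_), ?_⟩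
    · exact uIcc_subset_uIcc left_mem_uIcc (mem_uIcc_of_le ht.1 ht.2)
    · exact uIcc_subset_uIcc left_mem_uIcc (mem_uIcc_of_le ht'.1 ht'.2)
    · rw [intervalIntegral.integral_of_le htt]
      exact setIntegral_nonneg measurableSet_Ioc fun y hy =>
        hg0 y ⟨ht'.1.trans_lt hy.1, hy.2.trans ht.2⟩
  have hΦ_var : eVariationOn Φ (Icc s T) = ENNReal.ofReal (∫ y in s..T, g y) := by
    have hΦ_mono : MonotoneOn Φ (Icc s T) := fun t' ht' t ht htt => by
      have := hΦ_sub t' ht' t ht htt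
      linarith
    have := hΦ_mono.eVariationOn_eq (left_mem_Icc.2 hsT) (right_mem_Icc.2 hsT)
    rwa [inter_self, show Φ s = 0 from intervalIntegral.integral_same, sub_zero] at this
  rw [← hΦ_var]
  refine eVariationOn_le_mul_add_of_edist_le fun t' ht' t ht htt => ?_
  obtain ⟨hΦ_eq, hΦ_nonneg⟩ := hΦ_sub t' ht' t ht htt
  have hG : 0 ≤ ∫ y in s..T, g y := (hΦ_sub s ⟨le_rfl, hsT⟩ T ⟨hsT, le_rfl⟩ hsT).2
  simp only [edist_dist, Real.dist_eq]
  rw [abs_sub_comm, abs_sub_comm (h t'), abs_sub_comm (Φ t'), hΦ_eq, abs_of_nonneg hΦ_nonneg,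
    ← ENNReal.ofReal_mul (by positivity), ← ENNReal.ofReal_add (by positivity) hΦ_nonneg]
  refine ENNReal.ofReal_le_ofReal ((abs_intervalIntegral_param_sub_le hq hg hdom hlip hC
    (hh t ht) (hh t' ht') ht'.1 htt ht.2).trans (le_of_eq ?_))
  ring

end ParametricVolterra

theorem rpow_le_rpow_add_rpow {x p q c : ℝ} (hx : 0 < x) (hc : c ∈ Icc p q) :
    x ^ c ≤ x ^ p + x ^ q := by
  rcases le_total x 1 with hx1 | hx1
  · linarith [rpow_le_rpow_of_exponent_ge hx hx1 hc.1, rpow_nonneg hx.le q]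
  · linarith [rpow_le_rpow_of_exponent_le hx1 hc.2, rpow_nonneg hx.le p]

theorem abs_log_mul_rpow_le {x ε : ℝ} (hx : 0 < x) (hε : 0 < ε) (z : ℝ) :
    |log x| * x ^ z ≤ (x ^ (z + ε) + x ^ (z - ε)) / ε := by
  have hlog : log x ≤ x ^ ε / ε := log_le_rpow_div hx.le hε
  have hlog_inv : log x⁻¹ ≤ x⁻¹ ^ ε / ε := log_le_rpow_div (inv_pos.2 hx).le hε
  rw [log_inv, inv_rpow hx.le, ← rpow_neg hx.le] at hlog_inv
  have habs : |log x| ≤ (x ^ ε + x ^ (-ε)) / ε := by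
    have : 0 ≤ x ^ ε / ε := by positivity
    have : 0 ≤ x ^ (-ε) / ε := by positivity
    rw [abs_le, add_div]
    constructor <;> linarith
  calc |log x| * x ^ z ≤ (x ^ ε + x ^ (-ε)) / ε * x ^ z := by gcongr
    _ = (x ^ (z + ε) + x ^ (z - ε)) / ε := by
        rw [sub_eq_add_neg, rpow_add hx, rpow_add hx]
        ring

theorem abs_rpow_sub_rpow_le {x ε p q c c' : ℝ} (hx : 0 < x) (hε : 0 < ε)
    (hc : c ∈ Icc p q) (hc' : c' ∈ Icc p q) :
    |x ^ c - x ^ c'| ≤ 2 / ε * |c - c'| * (x ^ (p - ε) + x ^ (q + ε)) := by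
  have hderiv : ∀ z ∈ Icc p q, HasDerivWithinAt (fun t => x ^ t) (x ^ z * log x) (Icc p q) z :=
    fun z _ => (hasStrictDerivAt_const_rpow hx z).hasDerivAt.hasDerivWithinAt
  have hbound :
      ∀ z ∈ Icc p q, ‖x ^ z * log x‖ ≤ 2 / ε * (x ^ (p - ε) + x ^ (q + ε)) := by
    intro z hz
    have hmem : ∀ δ ∈ Icc (-ε) ε, z + δ ∈ Icc (p - ε) (q + ε) := fun δ hδ =>
      ⟨by linarith [hz.1, hδ.1], by linarith [hz.2, hδ.2]⟩
    have h₁ := rpow_le_rpow_add_rpow hx (hmem ε ⟨by linarith, le_rfl⟩)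
    have h₂ := rpow_le_rpow_add_rpow hx (hmem (-ε) ⟨le_rfl, by linarith⟩)
    rw [← sub_eq_add_neg] at h₂
    rw [Real.norm_eq_abs, abs_mul, abs_of_pos (rpow_pos_of_pos hx z), mul_comm]
    calc |log x| * x ^ z ≤ (x ^ (z + ε) + x ^ (z - ε)) / ε := abs_log_mul_rpow_le hx hε z
      _ ≤ (2 * (x ^ (p - ε) + x ^ (q + ε))) / ε := by gcongr; linarith
      _ = _ := by ring
  have := (convex_Icc p q).norm_image_sub_le_of_norm_hasDerivWithin_le hderiv hbound hc' hc
  simpa only [Real.norm_eq_abs, mul_assoc, mul_comm |c - c'|] using this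

noncomputable def kernelDensity (s H y : ℝ) : ℝ :=
  s ^ (1/2 - H) * ((y - s) ^ (H - 3/2) * y ^ (H - 1/2))

section KernelDensity

variable {s y H : ℝ}

theorem K_eq_intervalIntegral {t : ℝ} (hst : s ≤ t) :
    K H t s = ∫ y in s..t, kernelDensity s H y := by
  simp only [kernelDensity]
  rw [intervalIntegral.integral_const_mul, intervalIntegral.integral_of_le hst,
    integral_Ioc_eq_integral_Ioo]
  rfl

theorem kernelDensity_nonneg (hs : 0 ≤ s) (hsy : s ≤ y) : 0 ≤ kernelDensity s H y :=
  mul_nonneg (rpow_nonneg hs _)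
    (mul_nonneg (rpow_nonneg (sub_nonneg.2 hsy) _) (rpow_nonneg (hs.trans hsy) _))

theorem K_nonneg {t : ℝ} (hs : 0 ≤ s) : 0 ≤ K H t s :=
  mul_nonneg (rpow_nonneg hs _) (setIntegral_nonneg measurableSet_Ioo fun _ hy =>
    mul_nonneg (rpow_nonneg (sub_nonneg.2 hy.1.le) _) (rpow_nonneg (hs.trans hy.1.le) _))

theorem intervalIntegrable_sub_rpow {r : ℝ} (hr : -1 < r) (T : ℝ) :
    IntervalIntegrable (fun y => (y - s) ^ r) volume s T := by
  simpa using (intervalIntegral.intervalIntegrable_rpow' (a := 0) (b := T - s) hr).comp_sub_right s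

theorem intervalIntegrable_kernelDensity (hH : 1/2 < H) (T : ℝ) :
    IntervalIntegrable (kernelDensity s H) volume s T :=
  ((intervalIntegrable_sub_rpow (by linarith) T).mul_continuousOn
    (continuous_rpow_const (by linarith)).continuousOn).const_mul _

theorem kernelDensity_eq_rpow_mul (hs : 0 < s) (hsy : s < y) (H : ℝ) :
    kernelDensity s H y = ((y - s) * y / s) ^ H * kernelDensity s 0 y := by
  have hys : 0 < y - s := sub_pos.2 hsy
  have hy : 0 < y := hs.trans hsy
  simp only [kernelDensity]
  rw [div_rpow (by positivity) hs.le, mul_rpow hys.le hy.le,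
    show (1/2 - H : ℝ) = 1/2 + -H by ring, show (H - 3/2 : ℝ) = H + -(3/2) by ring,
    show (H - 1/2 : ℝ) = H + -(1/2) by ring,
    rpow_add hs, rpow_add hys, rpow_add hy, rpow_neg hs.le H]
  have : s ^ H ≠ 0 := (rpow_pos_of_pos hs H).ne'
  field_simp
  ring_nf

theorem abs_kernelDensity_le_add {p q : ℝ} (hs : 0 < s) (hsy : s < y) (hH : H ∈ Icc p q) :
    |kernelDensity s H y| ≤ kernelDensity s p y + kernelDensity s q y := by
  have hW : 0 < (y - s) * y / s := by have := sub_pos.2 hsy; have := hs.trans hsy; positivity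
  rw [abs_of_nonneg (kernelDensity_nonneg hs.le hsy.le), kernelDensity_eq_rpow_mul hs hsy H,
    kernelDensity_eq_rpow_mul hs hsy p, kernelDensity_eq_rpow_mul hs hsy q, ← add_mul]
  exact mul_le_mul_of_nonneg_right (rpow_le_rpow_add_rpow hW hH)
    (kernelDensity_nonneg hs.le hsy.le)

theorem abs_kernelDensity_sub_le {p q ε H' : ℝ} (hs : 0 < s) (hsy : s < y) (hε : 0 < ε)
    (hH : H ∈ Icc p q) (hH' : H' ∈ Icc p q) :
    |kernelDensity s H y - kernelDensity s H' y|
      ≤ 2 / ε * |H - H'| * (kernelDensity s (p - ε) y + kernelDensity s (q + ε) y) := by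
  have hW : 0 < (y - s) * y / s := by have := sub_pos.2 hsy; have := hs.trans hsy; positivity
  have hρ := kernelDensity_nonneg (H := 0) hs.le hsy.le
  simp only [kernelDensity_eq_rpow_mul hs hsy H, kernelDensity_eq_rpow_mul hs hsy H',
    kernelDensity_eq_rpow_mul hs hsy (p - ε), kernelDensity_eq_rpow_mul hs hsy (q + ε)]
  rw [← sub_mul, abs_mul, abs_of_nonneg hρ, ← add_mul, ← mul_assoc]
  exact mul_le_mul_of_nonneg_right (abs_rpow_sub_rpow_le hW hε hH hH') hρ

theorem K_le_rpow {T : ℝ} (hH : 1/2 < H) (hs : 0 < s) (hsT : s ≤ T) :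
    K H T s ≤ T ^ (2 * H - 1) / (H - 1/2) * s ^ (1/2 - H) := by
  have hT : 0 < T := hs.trans_le hsT
  have hr : H - 3/2 + 1 = H - 1/2 := by ring
  have hshift : ∫ y in s..T, (y - s) ^ (H - 3/2) = (T - s) ^ (H - 1/2) / (H - 1/2) := by
    rw [intervalIntegral.integral_comp_sub_right (fun y => y ^ (H - 3/2)), sub_self,
      integral_rpow (Or.inl (by linarith)), hr, zero_rpow (by linarith), sub_zero]
  rw [K_eq_intervalIntegral hsT]
  calc ∫ y in s..T, kernelDensity s H y
      ≤ ∫ y in s..T, s ^ (1/2 - H) * T ^ (H - 1/2) * (y - s) ^ (H - 3/2) := by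
        refine intervalIntegral.integral_mono_on hsT (intervalIntegrable_kernelDensity hH T)
          ?_ fun y hy => ?_
        · exact (intervalIntegrable_sub_rpow (by linarith) T).const_mul _
        · have : y ^ (H - 1/2) ≤ T ^ (H - 1/2) :=
            rpow_le_rpow (hs.le.trans hy.1) hy.2 (by linarith)
          have := rpow_nonneg (sub_nonneg.2 hy.1) (H - 3/2)
          have := rpow_nonneg hs.le (1/2 - H)
          simp only [kernelDensity]
          rw [mul_assoc, mul_comm (T ^ _)]
          gcongr
    _ = s ^ (1/2 - H) * T ^ (H - 1/2) * ((T - s) ^ (H - 1/2) / (H - 1/2)) := by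
        rw [intervalIntegral.integral_const_mul, hshift]
    _ ≤ s ^ (1/2 - H) * T ^ (H - 1/2) * (T ^ (H - 1/2) / (H - 1/2)) := by
        have : 0 < H - 1/2 := by linarith
        gcongr
        linarith
    _ = T ^ (2 * H - 1) / (H - 1/2) * s ^ (1/2 - H) := by
        rw [show 2 * H - 1 = (H - 1/2) + (H - 1/2) by ring, rpow_add hT]
        ring

end KernelDensity

theorem eVariationOn_K_comp_le {h : ℝ → ℝ} {s T a b ε : ℝ} (hs : 0 < s) (hsT : s ≤ T)
    (hε : 0 < ε) (ha : 1/2 < a - ε) (hh : ∀ t ∈ Icc s T, h t ∈ Icc a b) :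
    eVariationOn (fun t => K (h t) t s) (Icc s T)
      ≤ ENNReal.ofReal (2 / ε * (K (a - ε) T s + K (b + ε) T s)) * eVariationOn h (Icc s T)
        + ENNReal.ofReal (K (a - ε) T s + K (b + ε) T s) := by
  have hab : a ≤ b := (hh s ⟨le_rfl, hsT⟩).1.trans (hh s ⟨le_rfl, hsT⟩).2
  have hint : ∀ p, a - ε ≤ p → IntervalIntegrable (kernelDensity s p) volume s T :=
    fun p hp => intervalIntegrable_kernelDensity (by linarith) T
  have hsum : K (a - ε) T s + K (b + ε) T s
      = ∫ y in s..T, (kernelDensity s (a - ε) y + kernelDensity s (b + ε) y) := by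
    rw [K_eq_intervalIntegral hsT, K_eq_intervalIntegral hsT,
      intervalIntegral.integral_add (hint _ le_rfl) (hint _ (by linarith))]
  have hI : Icc a b ⊆ Icc (a - ε) (b + ε) := Icc_subset_Icc (by linarith) (by linarith)
  rw [eVariationOn.eq_of_eqOn fun t ht => K_eq_intervalIntegral (H := h t) ht.1, hsum]
  exact eVariationOn_intervalIntegral_param_le (fun p hp => hint p (by linarith [hp.1]))
    ((hint _ le_rfl).add (hint _ (by linarith)))
    (fun p hp y hy => abs_kernelDensity_le_add hs hy.1 (hI hp))
    (fun p hp p' hp' y hy => abs_kernelDensity_sub_le hs hy.1 hε hp hp')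
    (by positivity) hsT hh

theorem eVariationOn_K_comp_Ioc_le {h : ℝ → ℝ} {s T a b ε V : ℝ} (hs : 0 < s)
    (hsT : s ≤ T) (hε : 0 < ε) (ha : 1/2 < a - ε) (hh : ∀ t ∈ Icc s T, h t ∈ Icc a b)
    (hV : eVariationOn h (Icc s T) ≤ ENNReal.ofReal V) (hV0 : 0 ≤ V) :
    eVariationOn (fun t => K (h t) t s) (Ioc s T)
      ≤ ENNReal.ofReal ((2 / ε * V + 1) * (K (a - ε) T s + K (b + ε) T s)) := by
  set G := K (a - ε) T s + K (b + ε) T s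
  have hG : 0 ≤ G := add_nonneg (K_nonneg hs.le) (K_nonneg hs.le)
  calc _ ≤ eVariationOn (fun t => K (h t) t s) (Icc s T) :=
        eVariationOn.mono _ Ioc_subset_Icc_self
    _ ≤ ENNReal.ofReal (2 / ε * G) * eVariationOn h (Icc s T) + ENNReal.ofReal G :=
        eVariationOn_K_comp_le hs hsT hε ha hh
    _ ≤ ENNReal.ofReal (2 / ε * G) * ENNReal.ofReal V + ENNReal.ofReal G := by gcongr
    _ = ENNReal.ofReal ((2 / ε * V + 1) * G) := by
        rw [← ENNReal.ofReal_mul (by positivity), ← ENNReal.ofReal_add (by positivity) hG]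
        ring_nf

theorem memLp_two_rpow_restrict_Ioc {r : ℝ} (hr : -1/2 < r) (T : ℝ) :
    MemLp (fun s => s ^ r) 2 (volume.restrict (Ioc 0 T)) := by
  refine (memLp_two_iff_integrable_sq (by fun_prop)).2 ?_
  refine IntegrableOn.congr_fun (intervalIntegral.intervalIntegrable_rpow' (a := 0) (b := T)
    (r := r * 2) (by linarith)).1 (fun s hs => ?_) measurableSet_Ioc
  exact_mod_cast rpow_mul_natCast hs.1.le r 2

theorem setLIntegral_sq_lt_top_of_le_ofReal {α : Type*} [MeasurableSpace α] {μ : Measure α}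
    {S : Set α} {F : α → ℝ≥0∞} {B : α → ℝ} (hS : MeasurableSet S)
    (hB : MemLp B 2 (μ.restrict S))
    (hF : ∀ x ∈ S, F x ≤ ENNReal.ofReal (B x)) :
    ∫⁻ x in S, F x ^ 2 ∂μ < ⊤ := by
  refine lt_of_le_of_lt (setLIntegral_mono' hS fun x hx => ?_)
    (IntegrableOn.setLIntegral_lt_top hB.integrable_sq)
  calc F x ^ 2 ≤ ENNReal.ofReal |B x| ^ 2 := by
        gcongr
        exact (hF x hx).trans (ENNReal.ofReal_le_ofReal (le_abs_self _))
    _ = ENNReal.ofReal (B x ^ 2) := by rw [← ENNReal.ofReal_pow (abs_nonneg _), sq_abs]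

theorem stmt8_general (a b T : ℝ) (ha : 1/2 < a) (hb : b < 1)
    (h : ℝ → ℝ) (hrange : ∀ t, h t ∈ Set.Icc a b)
    (hBV : BoundedVariationOn h (Set.Icc 0 T)) :
    (∀ s ∈ Set.Ioo (0:ℝ) T, BoundedVariationOn (fun t => K (h t) t s) (Set.Ioc s T)) ∧
    (∫⁻ s in Set.Ioc (0:ℝ) T,
        (eVariationOn (fun t => K (h t) t s) (Set.Ioc s T)) ^ 2) < ⊤ := by
  obtain ⟨ε, hε, ha', hb'⟩ : ∃ ε > 0, 1/2 < a - ε ∧ b + ε < 1 :=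
    ⟨min (a - 1/2) (1 - b) / 2, by positivity, by linarith [min_le_left (a - 1/2) (1 - b)],
      by linarith [min_le_right (a - 1/2) (1 - b)]⟩
  have hab : a ≤ b := (hrange 0).1.trans (hrange 0).2
  set V := (eVariationOn h (Icc 0 T)).toReal
  have hvar : ∀ s ∈ Ioc 0 T, eVariationOn (fun t => K (h t) t s) (Ioc s T)
      ≤ ENNReal.ofReal ((2 / ε * V + 1) * (K (a - ε) T s + K (b + ε) T s)) :=
    fun s hs => eVariationOn_K_comp_Ioc_le hs.1 hs.2 hε ha' (fun t _ => hrange t)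
      (ENNReal.ofReal_toReal hBV ▸ eVariationOn.mono _ (Icc_subset_Icc_left hs.1.le))
      ENNReal.toReal_nonneg
  set c₁ := T ^ (2 * (a - ε) - 1) / (a - ε - 1/2)
  set c₂ := T ^ (2 * (b + ε) - 1) / (b + ε - 1/2)
  have hB : MemLp
      (fun s => (2 / ε * V + 1) * (c₁ * s ^ (1/2 - (a - ε)) + c₂ * s ^ (1/2 - (b + ε))))
      2 (volume.restrict (Ioc 0 T)) :=
    (((memLp_two_rpow_restrict_Ioc (by linarith) T).const_mul c₁).add
      ((memLp_two_rpow_restrict_Ioc (by linarith) T).const_mul c₂)).const_mul _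
  refine ⟨fun s hs => ne_top_of_le_ne_top ENNReal.ofReal_ne_top (hvar s (Ioo_subset_Ioc_self hs)),
    setLIntegral_sq_lt_top_of_le_ofReal measurableSet_Ioc hB fun s hs =>
      (hvar s hs).trans (ENNReal.ofReal_le_ofReal ?_)⟩
  exact mul_le_mul_of_nonneg_left (add_le_add (K_le_rpow (by linarith) hs.1 hs.2)
    (K_le_rpow (by linarith) hs.1 hs.2)) (by positivity)

theorem stmt8 (a b T : ℝ) (ha : 1/2 < a) (hab : a < b) (hb : b < 1) (hT : 0 < T)
    (h : ℝ → ℝ) (hrange : ∀ t, h t ∈ Set.Icc a b)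
    (hBV : BoundedVariationOn h (Set.Icc 0 T))
    (L : NNReal) (hLip : LipschitzOnWith L h (Set.Icc 0 T)) :
    (∀ s ∈ Set.Ioo (0:ℝ) T, BoundedVariationOn (fun t => K (h t) t s) (Set.Ioc s T)) ∧
    (∫⁻ s in Set.Ioc (0:ℝ) T,
        (eVariationOn (fun t => K (h t) t s) (Set.Ioc s T)) ^ 2) < ⊤ :=
  stmt8_general a b T ha hb h hrange hBV
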